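/- arXiv:1903.07391 — 5 statements merged into one kernel-verified Lean document; each statement's English description precedes it below -/
import Mathlib

section
/- N-transform of the generalized rising function: for α ∈ ℂ with α not a negative integer, 𝒩_a{(k−a)^{ᾱ}}(s) = Γ(α+1)/s^{α+1} for complex s with |s−1| < 1 (and s in an appropriate branch domain), where (k−a)^{ᾱ} = Γ(k−a+α)/Γ(k−a) is the rising factorial function evaluated at k ∈ ℕ_{a+1}. -/
/-!
Since `Γ(α + 1 + k) / k! = Γ(α + 1) · binom(α + k, k)`, the series is `Γ(α + 1)` times the
binomial series of `(1 - z) ^ (-(α + 1))` at `z = 1 - s`, which converges on the unit disc.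
-/

open scoped Nat

lemma Complex.Gamma_add_nat_div_factorial {a : ℂ} (ha : ∀ k : ℕ, a ≠ -k) (n : ℕ) :
    Gamma (a + n) / n ! = Gamma a * Ring.choose (a + n - 1) n := by
  rw [← Ring.multichoose_eq, div_eq_iff (by exact_mod_cast n.factorial_ne_zero), mul_assoc,
    ← nsmul_eq_mul', Ring.factorial_nsmul_multichoose_eq_ascPochhammer,
    Polynomial.ascPochhammer_smeval_eq_eval, ← Gamma_add_nat_div_Gamma_eq a ha,
    mul_div_cancel₀ _ (Gamma_ne_zero ha)]

/-- N-transform of the generalized rising function: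
`𝒩_a{(k−a)^{ᾱ}}(s) = Γ(α+1)/s^(α+1)` for `|s−1| < 1`. -/
theorem nabla_transform_rising_function
    (α : ℂ) (hα : ∀ n : ℕ, α ≠ -((n : ℂ) + 1)) :
    ∀ s : ℂ, ‖s - 1‖ < 1 → s ≠ 0 →
      HasSum (fun k : ℕ =>
          (1 - s) ^ k * (Complex.Gamma ((k : ℂ) + 1 + α) / Complex.Gamma ((k : ℂ) + 1)))
        (Complex.Gamma (α + 1) / s ^ (α + 1)) := by
  intro s hs _
  have hα' : ∀ k : ℕ, α + 1 ≠ -k := fun k h => hα k (by linear_combination h)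
  have hz : 1 - s ∈ Metric.eball (0 : ℂ) 1 := by
    rw [← ENNReal.ofReal_one, Metric.eball_ofReal, mem_ball_zero_iff, norm_sub_rev]
    exact hs
  have hbinom := ((Complex.one_div_one_sub_cpow_hasFPowerSeriesOnBall_zero (α + 1)).hasSum
    hz).mul_left (Complex.Gamma (α + 1))
  simp only [FormalMultilinearSeries.ofScalars_apply_eq, zero_add, sub_sub_cancel, smul_eq_mul,
    mul_one_div] at hbinom
  refine hbinom.congr_fun fun k => ?_
  rw [Complex.Gamma_nat_eq_factorial, show (k : ℂ) + 1 + α = α + 1 + k by ring,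
    Complex.Gamma_add_nat_div_factorial hα']
  ring
end

section
/- Accumulation property of the N-transform: if X(s) = 𝒩_a{x}(s) converges for |s−1| < r, then the N-transform of the running sum y(k) = Σ_{j=a+1}^{k} x(j) converges for |s−1| < min(1, r), with s ≠ 0, and equals X(s)/s. -/
/-!
Writing `q = 1 - s`, the transform of the running sum is the Cauchy product of
`∑ qᵏ x(k+1+a)` with the geometric series `∑ qᵏ = 1/s`. Both converge absolutely: the
geometric one since `‖q‖ < 1`, the other by Abel's lemma, because the series also converges
at a real point `1 - ρ` with `‖q‖ < ρ < r`.
-/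

open Finset

section

variable {𝕜 : Type*} [NormedField 𝕜]

theorem summable_norm_pow_mul_of_summable_pow_mul {c : ℕ → 𝕜} {z q : 𝕜}
    (hz : Summable fun k => z ^ k * c k) (hq : ‖q‖ < ‖z‖) :
    Summable fun k => ‖q ^ k * c k‖ := by
  have hz0 : 0 < ‖z‖ := (norm_nonneg q).trans_lt hq
  obtain ⟨C, hC⟩ : BddAbove (Set.range fun k => ‖z ^ k * c k‖) :=
    hz.tendsto_atTop_zero.norm.bddAbove_range
  have hgeom : Summable fun k => C * (‖q‖ / ‖z‖) ^ k :=
    (summable_geometric_of_lt_one (by positivity) ((div_lt_one hz0).2 hq)).mul_left C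
  refine hgeom.of_nonneg_of_le (fun _ => norm_nonneg _) fun k => ?_
  calc ‖q ^ k * c k‖ = (‖q‖ / ‖z‖) ^ k * ‖z ^ k * c k‖ := by
        rw [norm_mul, norm_mul, norm_pow, norm_pow, div_pow]
        field_simp
    _ ≤ (‖q‖ / ‖z‖) ^ k * C := by gcongr; exact hC (Set.mem_range_self k)
    _ = C * (‖q‖ / ‖z‖) ^ k := mul_comm _ _

theorem hasSum_pow_mul_sum_range [CompleteSpace 𝕜] {b : ℕ → 𝕜} {q B : 𝕜} (hq : ‖q‖ < 1)
    (hb : HasSum (fun k => q ^ k * b k) B) (hb_norm : Summable fun k => ‖q ^ k * b k‖) :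
    HasSum (fun k => q ^ k * ∑ j ∈ range (k + 1), b j) (B / (1 - q)) := by
  have hcauchy := hasSum_sum_range_mul_of_summable_norm hb_norm
    (summable_norm_geometric_of_norm_lt_one hq)
  rw [hb.tsum_eq, tsum_geometric_of_norm_lt_one hq, ← div_eq_mul_inv] at hcauchy
  convert hcauchy using 2 with k
  rw [mul_sum]
  refine sum_congr rfl fun j hj => ?_
  rw [← pow_mul_pow_sub q (mem_range_succ_iff.1 hj)]
  ring

end

/-- Accumulation property of the N-transform:
the running sum has transform `X(s)/s`. -/
theorem nabla_transform_accumulation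
    (a : ℤ) (x : ℤ → ℝ) (X : ℂ → ℂ) (r : ℝ)
    (hX : ∀ s : ℂ, ‖s - 1‖ < r →
      HasSum (fun k : ℕ => (1 - s) ^ k * (x ((k : ℤ) + 1 + a) : ℂ)) (X s)) :
    ∀ s : ℂ, ‖s - 1‖ < min 1 r → s ≠ 0 →
      HasSum (fun k : ℕ =>
          (1 - s) ^ k * ((∑ j ∈ Finset.range (k + 1), x ((j : ℤ) + 1 + a) : ℝ) : ℂ))
        (X s / s) := by
  intro s hs _
  rw [lt_min_iff, ← norm_sub_rev] at hs
  obtain ⟨hs1, hsr⟩ := hs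
  obtain ⟨ρ, hsρ, hρr⟩ := exists_between hsr
  have hρ : ‖(ρ : ℂ)‖ = ρ := by
    rw [Complex.norm_real, Real.norm_of_nonneg ((norm_nonneg _).trans hsρ.le)]
  have hXρ := hX (1 - ρ) (by rwa [sub_sub_cancel_left, norm_neg, hρ])
  rw [sub_sub_cancel] at hXρ
  have habs := summable_norm_pow_mul_of_summable_pow_mul hXρ.summable (hρ ▸ hsρ)
  have hXs := hX s (by rwa [norm_sub_rev])
  simpa using hasSum_pow_mul_sum_range hs1 hXs habs
end

section
/- N-transform of the n-th nabla difference: if X(s) = 𝒩_a{x}(s) converges for |s−1| < r ≤ 1, then for any n ∈ ℤ₊, 𝒩_a{∇ⁿx}(s) = sⁿ X(s) − Σ_{j=0}^{n−1} s^{n−j−1} (∇ʲx)(a), where ∇ⁿx(k) = Σ_{j=0}^{n} (−1)ʲ C(n,j) x(k−j). -/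
/-!
Pascal's rule gives `∇ⁿ⁺¹x(k) = ∇ⁿx(k) − ∇ⁿx(k−1)`, and shifting the summation index of the
series shows `𝒩_a{∇y}(s) = s 𝒩_a{y}(s) − y(a)`: the backward difference becomes multiplication
by `s` up to a boundary term. Applying this `n` times produces `sⁿ X(s)` together with the
boundary terms `s^{n−j−1} (∇ʲx)(a)`.
-/

/-- The `n`-th nabla (backward) difference `∇ⁿx(k) = Σ_{j=0}^{n} (−1)ʲ C(n,j) x(k−j)`. -/
noncomputable def nablaDiff (n : ℕ) (x : ℤ → ℝ) (k : ℤ) : ℝ :=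
  ∑ j ∈ Finset.range (n + 1), (-1 : ℝ) ^ j * (n.choose j : ℝ) * x (k - (j : ℤ))

open Finset

theorem nablaDiff_zero (x : ℤ → ℝ) : nablaDiff 0 x = x := by
  ext k; simp [nablaDiff]

theorem nablaDiff_succ (n : ℕ) (x : ℤ → ℝ) (k : ℤ) :
    nablaDiff (n + 1) x k = nablaDiff n x k - nablaDiff n x (k - 1) := by
  have pascal := sum_choose_succ_mul (R := ℝ) (fun j _ ↦ (-1 : ℝ) ^ j * x (k - j)) n
  simp only [nablaDiff, sub_eq_add_neg, ← sum_neg_distrib]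
  convert pascal using 2 with j <;> push_cast <;> ring_nf

theorem HasSum.one_sub_pow_mul_sub {R : Type*} [CommRing R] [TopologicalSpace R]
    [IsTopologicalRing R] {f : ℕ → R} {s Y : R}
    (h : HasSum (fun k ↦ (1 - s) ^ k * f (k + 1)) Y) :
    HasSum (fun k ↦ (1 - s) ^ k * (f (k + 1) - f k)) (s * Y - f 0) := by
  have shifted : HasSum (fun k ↦ (1 - s) ^ (k + 1) * f (k + 1)) ((1 - s) * Y) := by
    simpa only [pow_succ', mul_assoc] using h.mul_left (1 - s)
  have unshifted : HasSum (fun k ↦ (1 - s) ^ k * f k) ((1 - s) * Y + f 0) := by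
    simpa using (hasSum_nat_add_iff (f := fun k ↦ (1 - s) ^ k * f k) 1).mp shifted
  have difference := h.sub unshifted
  rw [show Y - ((1 - s) * Y + f 0) = s * Y - f 0 by ring] at difference
  simpa only [mul_sub] using difference

theorem mul_sum_pow_add {R : Type*} [CommSemiring R] (s : R) (c : ℕ → R) (n : ℕ) :
    s * ∑ j ∈ range n, s ^ (n - j - 1) * c j + c n =
      ∑ j ∈ range (n + 1), s ^ (n + 1 - j - 1) * c j := by
  rw [sum_range_succ, mul_sum, Nat.add_sub_cancel_left, Nat.sub_self, pow_zero, one_mul]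
  congr 1
  refine sum_congr rfl fun j hj ↦ ?_
  rw [← mul_assoc, ← pow_succ']
  congr 2
  have := mem_range.mp hj
  omega

theorem hasSum_nablaDiff_transform {a : ℤ} {x : ℤ → ℝ} {s X : ℂ}
    (hX : HasSum (fun k : ℕ ↦ (1 - s) ^ k * (x ((k : ℤ) + 1 + a) : ℂ)) X) (n : ℕ) :
    HasSum (fun k : ℕ ↦ (1 - s) ^ k * (nablaDiff n x ((k : ℤ) + 1 + a) : ℂ))
      (s ^ n * X - ∑ j ∈ range n, s ^ (n - j - 1) * (nablaDiff j x a : ℂ)) := by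
  induction n with
  | zero => simpa [nablaDiff_zero] using hX
  | succ n ih =>
    let f : ℕ → ℂ := fun m ↦ nablaDiff n x (m + a)
    have shifted : HasSum (fun k ↦ (1 - s) ^ k * f (k + 1))
        (s ^ n * X - ∑ j ∈ range n, s ^ (n - j - 1) * (nablaDiff j x a : ℂ)) := by
      simpa only [f, Nat.cast_succ] using ih
    have terms : (fun k ↦ (1 - s) ^ k * (f (k + 1) - f k)) =
        fun k : ℕ ↦ (1 - s) ^ k * (nablaDiff (n + 1) x ((k : ℤ) + 1 + a) : ℂ) := by
      ext k
      simp only [f, nablaDiff_succ]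
      push_cast
      ring_nf
    have value :
        s * (s ^ n * X - ∑ j ∈ range n, s ^ (n - j - 1) * (nablaDiff j x a : ℂ)) - f 0 =
        s ^ (n + 1) * X - ∑ j ∈ range (n + 1), s ^ (n + 1 - j - 1) * (nablaDiff j x a : ℂ) := by
      rw [← mul_sum_pow_add s (fun j ↦ (nablaDiff j x a : ℂ))]
      simp only [f, Nat.cast_zero, zero_add]
      ring
    rw [← terms, ← value]
    exact shifted.one_sub_pow_mul_sub

theorem nabla_transform_nabla_diff_n_general
    (a : ℤ) (x : ℤ → ℝ) (X : ℂ → ℂ) (r : ℝ)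
    (hX : ∀ s : ℂ, ‖s - 1‖ < r →
      HasSum (fun k : ℕ => (1 - s) ^ k * (x ((k : ℤ) + 1 + a) : ℂ)) (X s)) :
    ∀ n : ℕ, 0 < n → ∀ s : ℂ, ‖s - 1‖ < r →
      HasSum (fun k : ℕ => (1 - s) ^ k * (nablaDiff n x ((k : ℤ) + 1 + a) : ℂ))
        (s ^ n * X s -
          ∑ j ∈ Finset.range n, s ^ (n - j - 1) * (nablaDiff j x a : ℂ)) :=
  fun n _ s hs ↦ hasSum_nablaDiff_transform (hX s hs) n

/-- N-transform of the `n`-th nabla difference: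
`𝒩_a{∇ⁿx}(s) = sⁿ X(s) − Σ_{j=0}^{n−1} s^{n−j−1} (∇ʲx)(a)`. -/
theorem nabla_transform_nabla_diff_n
    (a : ℤ) (x : ℤ → ℝ) (X : ℂ → ℂ) (r : ℝ) (hr : r ≤ 1)
    (hX : ∀ s : ℂ, ‖s - 1‖ < r →
      HasSum (fun k : ℕ => (1 - s) ^ k * (x ((k : ℤ) + 1 + a) : ℂ)) (X s)) :
    ∀ n : ℕ, 0 < n → ∀ s : ℂ, ‖s - 1‖ < r →
      HasSum (fun k : ℕ => (1 - s) ^ k * (nablaDiff n x ((k : ℤ) + 1 + a) : ℂ))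
        (s ^ n * X s -
          ∑ j ∈ Finset.range n, s ^ (n - j - 1) * (nablaDiff j x a : ℂ)) :=
  nabla_transform_nabla_diff_n_general a x X r hX
end

section
/- N-transform of the nabla fractional sum: for x : ℕ_{a+1} → ℝ with X(s) = 𝒩_a{x}(s) converging for |s−1| < r, and for any α > 0, the N-transform of the α-th nabla fractional sum (∇^{−α}x)(k) = Σ_{j=0}^{k−a−1} (−1)ʲ binom(−α, j) x(k−j) equals X(s)/s^α for |s−1| < min(1, r). -/
/-!
The weights `Γ(α + j) / (Γ(j + 1) Γ(α))` are the binomial coefficients `choose (α + j - 1) j`,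
i.e. the Taylor coefficients of `(1 - z)^(-α)` on the unit disc. In the variable `z = 1 - s` the
N-transform is a power series, and `∇^{-α} x` is the Cauchy product of `x` with these weights.
Both series converge absolutely for `|z| < min 1 r`, so the transform of `∇^{-α} x` is
`(1 - z)^(-α) X(s) = X(s) / s^α`.
-/

/-- The `α`-th nabla fractional sum evaluated at `k`, with
`(−1)ʲ binom(−α,j) = Γ(α+j)/(Γ(j+1)Γ(α))`. -/
noncomputable def nablaFracSum (a : ℤ) (α : ℝ) (x : ℤ → ℝ) (k : ℤ) : ℝ :=
  ∑ j ∈ Finset.range ((k - a - 1).toNat + 1),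
    Real.Gamma (α + j) / (Real.Gamma ((j : ℝ) + 1) * Real.Gamma α) * x (k - (j : ℤ))

open Finset

theorem Complex.Gamma_add_nat_div_eq_choose {α : ℂ} (hα : ∀ k : ℕ, α ≠ -k) (n : ℕ) :
    Complex.Gamma (α + n) / (Complex.Gamma (n + 1) * Complex.Gamma α)
      = Ring.choose (α + n - 1) n := by
  rw [Ring.choose_eq_smul, Polynomial.descPochhammer_smeval_eq_ascPochhammer,
    Polynomial.ascPochhammer_smeval_eq_eval, show α + n - 1 - n + 1 = α by ring,
    ← Complex.Gamma_add_nat_div_Gamma_eq α hα, Complex.Gamma_nat_eq_factorial, smul_eq_mul]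
  field_simp

theorem summable_norm_mul_pow_of_forall_summable {𝕜 : Type*} [DenselyNormedField 𝕜]
    {c : ℕ → 𝕜} {r : ℝ} (hc : ∀ w : 𝕜, ‖w‖ < r → Summable fun n => c n * w ^ n)
    {z : 𝕜} (hz : ‖z‖ < r) : Summable fun n => ‖c n * z ^ n‖ := by
  obtain ⟨w, hzw, hwr⟩ := NormedField.exists_lt_norm_lt 𝕜 (norm_nonneg z) hz
  set p := FormalMultilinearSeries.ofScalars 𝕜 c
  have hp : (‖w‖₊ : ENNReal) ≤ p.radius := by
    refine p.le_radius_of_tendsto (l := 0) ?_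
    simpa [p, FormalMultilinearSeries.ofScalars_norm, norm_mul] using
      (hc w hwr).tendsto_atTop_zero.norm
  have hzp : (‖z‖₊ : ENNReal) < p.radius := lt_of_lt_of_le (by exact_mod_cast hzw) hp
  simpa [p, FormalMultilinearSeries.ofScalars_norm, norm_mul] using p.summable_norm_mul_pow hzp

theorem Complex.hasSum_one_sub_cpow_neg {a z : ℂ} (hz : ‖z‖ < 1) :
    HasSum (fun n : ℕ => Ring.choose (a + n - 1) n * z ^ n) ((1 - z) ^ (-a)) := by
  have hz' : z ∈ Metric.eball 0 1 := by
    rw [Metric.mem_eball, edist_zero_right, ← ofReal_norm]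
    exact ENNReal.ofReal_lt_one.mpr hz
  simpa [FormalMultilinearSeries.ofScalars_apply_eq, Complex.cpow_neg, mul_comm] using
    (Complex.one_div_one_sub_cpow_hasFPowerSeriesOnBall_zero a).hasSum hz'

theorem hasSum_sum_range_mul_mul_pow {𝕜 : Type*} [DenselyNormedField 𝕜] [CompleteSpace 𝕜]
    {c d : ℕ → 𝕜} {f g : 𝕜 → 𝕜} {r₁ r₂ : ℝ}
    (hc : ∀ w : 𝕜, ‖w‖ < r₁ → HasSum (fun n => c n * w ^ n) (f w))
    (hd : ∀ w : 𝕜, ‖w‖ < r₂ → HasSum (fun n => d n * w ^ n) (g w))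
    {z : 𝕜} (hz₁ : ‖z‖ < r₁) (hz₂ : ‖z‖ < r₂) :
    HasSum (fun n => (∑ j ∈ range (n + 1), c j * d (n - j)) * z ^ n) (f z * g z) := by
  have hcauchy := hasSum_sum_range_mul_of_summable_norm
    (summable_norm_mul_pow_of_forall_summable (fun w hw => (hc w hw).summable) hz₁)
    (summable_norm_mul_pow_of_forall_summable (fun w hw => (hd w hw).summable) hz₂)
  rw [(hc z hz₁).tsum_eq, (hd z hz₂).tsum_eq] at hcauchy
  refine hcauchy.congr_fun fun n => ?_
  rw [sum_mul]
  refine sum_congr rfl fun j hj => ?_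
  rw [← pow_mul_pow_sub z (Nat.le_of_lt_succ (mem_range.mp hj))]
  ring

theorem nablaFracSum_natCast_add_one_add (a : ℤ) (α : ℝ) (x : ℤ → ℝ) (n : ℕ) :
    nablaFracSum a α x (n + 1 + a) =
      ∑ j ∈ range (n + 1),
        Real.Gamma (α + j) / (Real.Gamma ((j : ℝ) + 1) * Real.Gamma α) *
          x ((n - j : ℕ) + 1 + a) := by
  rw [nablaFracSum, show (n : ℤ) + 1 + a - a - 1 = n by ring, Int.toNat_natCast]
  refine sum_congr rfl fun j hj => ?_
  rw [Nat.cast_sub (Nat.le_of_lt_succ (mem_range.mp hj))]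
  ring_nf

/-- N-transform of the nabla fractional sum: `𝒩_a{∇^{−α}x}(s) = X(s)/s^α`. -/
theorem nabla_transform_frac_sum
    (a : ℤ) (x : ℤ → ℝ) (X : ℂ → ℂ) (r : ℝ) (α : ℝ) (hα : 0 < α)
    (hX : ∀ s : ℂ, ‖s - 1‖ < r →
      HasSum (fun k : ℕ => (1 - s) ^ k * (x ((k : ℤ) + 1 + a) : ℂ)) (X s)) :
    ∀ s : ℂ, ‖s - 1‖ < min 1 r →
      HasSum (fun k : ℕ => (1 - s) ^ k * (nablaFracSum a α x ((k : ℤ) + 1 + a) : ℂ))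
        (X s / s ^ (α : ℂ)) := by
  intro s hs
  have hα_ne : ∀ k : ℕ, (α : ℂ) ≠ -k := fun k => by
    exact_mod_cast (hα.trans_le' (neg_nonpos.mpr k.cast_nonneg)).ne'
  have hz : ‖1 - s‖ < min 1 r := by rwa [norm_sub_rev]
  have hprod := hasSum_sum_range_mul_mul_pow (𝕜 := ℂ) (r₁ := 1) (r₂ := r)
    (fun w hw => Complex.hasSum_one_sub_cpow_neg (a := α) hw)
    (g := fun w => X (1 - w)) (d := fun k => (x ((k : ℤ) + 1 + a) : ℂ))
    (fun w hw => by simpa [mul_comm] using hX (1 - w) (by rwa [sub_sub_cancel_left, norm_neg]))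
    (lt_of_lt_of_le hz (min_le_left _ _)) (lt_of_lt_of_le hz (min_le_right _ _))
  rw [sub_sub_cancel, Complex.cpow_neg, inv_mul_eq_div] at hprod
  refine hprod.congr_fun fun n => ?_
  rw [nablaFracSum_natCast_add_one_add, mul_comm]
  push_cast
  simp_rw [← Complex.Gamma_ofReal, Complex.ofReal_add, Complex.ofReal_natCast,
    Complex.ofReal_one, Complex.Gamma_add_nat_div_eq_choose hα_ne]
end

section
/- N-transform of the nabla Grünwald–Letnikov fractional difference: for x : ℕ_{a+1} → ℝ with X(s) = 𝒩_a{x}(s) converging for |s−1| < r ≤ 1, and for any α > 0 with α ∉ ℤ₊, the N-transform of (ᴳ∇^α x)(k) = Σ_{j=0}^{k−a−1} (−1)ʲ binom(α, j) x(k−j) equals s^α X(s) for |s−1| < r. -/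
/-! With `z = 1 - s` the N-transform is a power series in `z`. The Grünwald–Letnikov weights
`(-1)ʲ binom(α, j)` are the coefficients of the binomial series of `(1 - z)^α = s^α`, so `ᴳ∇^α x`
is the Cauchy convolution of these weights with `x`. For `|z| < r ≤ 1` both series converge
absolutely (that of `X` because a power series converges absolutely strictly inside any disc on
which it converges), so the transform of the convolution is the product `s^α X(s)`. -/

/-- The `α`-th nabla Grünwald–Letnikov fractional difference evaluated at `k`, with
`(−1)ʲ binom(α,j) = Γ(j−α)/(Γ(−α)Γ(j+1))`. -/
noncomputable def nablaGLDiff (a : ℤ) (α : ℝ) (x : ℤ → ℝ) (k : ℤ) : ℝ :=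
  ∑ j ∈ Finset.range ((k - a - 1).toNat + 1),
    Real.Gamma ((j : ℝ) - α) / (Real.Gamma (-α) * Real.Gamma ((j : ℝ) + 1)) *
      x (k - (j : ℤ))

open Finset Filter Topology
open scoped Nat

theorem Real.Gamma_add_nat_eq_prod_mul {s : ℝ} (hs : ∀ m : ℕ, s ≠ -m) (n : ℕ) :
    Real.Gamma (s + n) = (∏ i ∈ range n, (s + i)) * Real.Gamma s := by
  induction n with
  | zero => simp
  | succ n ih =>
    have hsn : s + n ≠ 0 := fun h => hs n (by linarith)
    rw [Nat.cast_succ, ← add_assoc, Real.Gamma_add_one hsn, ih, prod_range_succ]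
    ring

theorem Ring.choose_eq_prod_range_div {K : Type*} [Field K] [CharZero K] (a : K) (n : ℕ) :
    Ring.choose a n = (∏ i ∈ range n, (a - i)) / n ! := by
  rw [Ring.choose_eq_smul, ← descPochhammer_eval_eq_prod_range, smul_eq_mul, inv_mul_eq_div,
    ← Polynomial.aeval_eq_smeval, ← Polynomial.eval_map_algebraMap, descPochhammer_map]

theorem Real.Gamma_nat_sub_div_eq_neg_one_pow_mul_choose {α : ℝ} (hα : ∀ n : ℕ, α ≠ n)
    (j : ℕ) :
    Real.Gamma (j - α) / (Real.Gamma (-α) * Real.Gamma (j + 1)) =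
      (-1) ^ j * Ring.choose α j := by
  have hs : ∀ m : ℕ, -α ≠ -m := fun m h => hα m (neg_injective h)
  have hΓ : Real.Gamma (-α) ≠ 0 := Real.Gamma_ne_zero hs
  have hprod : ∏ i ∈ range j, (-α + i) = (-1) ^ j * ∏ i ∈ range j, (α - i) := by
    have hneg := prod_neg (s := range j) fun i : ℕ => α - i
    rw [card_range] at hneg
    rw [← hneg]
    exact prod_congr rfl fun i _ => by ring
  rw [sub_eq_neg_add, Real.Gamma_add_nat_eq_prod_mul hs, Real.Gamma_nat_eq_factorial,
    Ring.choose_eq_prod_range_div, hprod]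
  field_simp

theorem Complex.hasSum_choose_mul_pow (a : ℂ) {z : ℂ} (hz : ‖z‖ < 1) :
    HasSum (fun n => Ring.choose a n * z ^ n) ((1 + z) ^ a) := by
  have hz' : z ∈ Metric.eball (0 : ℂ) 1 := by simpa [← ofReal_norm] using hz
  simpa [binomialSeries, FormalMultilinearSeries.ofScalars_apply_eq, mul_comm] using
    Complex.one_add_cpow_hasFPowerSeriesOnBall_zero.hasSum hz'

theorem Complex.summable_norm_choose_mul_pow (a : ℂ) {z : ℂ} (hz : ‖z‖ < 1) :
    Summable (fun n => ‖Ring.choose a n * z ^ n‖) := by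
  have hrad : (‖z‖₊ : ENNReal) < (binomialSeries ℂ a).radius :=
    lt_of_lt_of_le (by exact_mod_cast hz) binomialSeries_radius_ge_one
  simpa [binomialSeries, FormalMultilinearSeries.ofScalars_norm] using
    (binomialSeries ℂ a).summable_norm_mul_pow hrad

theorem summable_norm_pow_mul_of_forall_summable {𝕜 : Type*} [DenselyNormedField 𝕜]
    {c : ℕ → 𝕜} {r : ℝ} (hc : ∀ w : 𝕜, ‖w‖ < r → Summable (fun n => w ^ n * c n))
    {z : 𝕜} (hz : ‖z‖ < r) :
    Summable (fun n => ‖z ^ n * c n‖) := by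
  obtain ⟨w, hzw, hwr⟩ := NormedField.exists_lt_norm_lt 𝕜 (norm_nonneg z) hz
  set p := FormalMultilinearSeries.ofScalars 𝕜 c
  have hw : Tendsto (fun n => ‖p n‖ * (‖w‖₊ : ℝ) ^ n) atTop (𝓝 0) := by
    simpa [p, mul_comm] using (hc w hwr).tendsto_atTop_zero.norm
  have hrad : (‖z‖₊ : ENNReal) < p.radius :=
    lt_of_lt_of_le (by exact_mod_cast hzw) (p.le_radius_of_tendsto hw)
  simpa [p, mul_comm] using p.summable_norm_mul_pow hrad

theorem nablaGLDiff_nat_add_one_add {α : ℝ} (hα : ∀ n : ℕ, α ≠ n) (a : ℤ) (x : ℤ → ℝ)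
    (n : ℕ) :
    nablaGLDiff a α x (n + 1 + a) =
      ∑ j ∈ range (n + 1), (-1) ^ j * Ring.choose α j * x ((n - j : ℕ) + 1 + a) := by
  rw [nablaGLDiff, show (((n : ℤ) + 1 + a) - a - 1).toNat = n by omega]
  refine sum_congr rfl fun j hj => ?_
  rw [Real.Gamma_nat_sub_div_eq_neg_one_pow_mul_choose hα,
    show (n : ℤ) + 1 + a - j = ((n - j : ℕ) : ℤ) + 1 + a by
      have := mem_range_succ_iff.1 hj; omega]

theorem nabla_transform_GL_diff_general
    (a : ℤ) (x : ℤ → ℝ) (X : ℂ → ℂ) (r : ℝ) (hr : r ≤ 1)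
    (α : ℝ) (hαZ : ∀ n : ℕ, α ≠ (n : ℝ))
    (hX : ∀ s : ℂ, ‖s - 1‖ < r →
      HasSum (fun k : ℕ => (1 - s) ^ k * (x ((k : ℤ) + 1 + a) : ℂ)) (X s)) :
    ∀ s : ℂ, ‖s - 1‖ < r →
      HasSum (fun k : ℕ => (1 - s) ^ k * (nablaGLDiff a α x ((k : ℤ) + 1 + a) : ℂ))
        (s ^ (α : ℂ) * X s) := by
  intro s hs
  set z := 1 - s with hz_def
  have hzr : ‖z‖ < r := by rwa [← norm_neg, neg_sub]
  have hz1 : ‖-z‖ < 1 := by rw [norm_neg]; linarith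
  have hXz : HasSum (fun k : ℕ => z ^ k * (x ((k : ℤ) + 1 + a) : ℂ)) (X s) := hX s hs
  have hXnorm := summable_norm_pow_mul_of_forall_summable
    (fun w hw => (hX (1 - w) (by rwa [sub_sub_cancel_left, norm_neg])).summable.congr
      fun k => by rw [sub_sub_cancel]) hzr
  have hbin := Complex.hasSum_choose_mul_pow (α : ℂ) hz1
  rw [show 1 + -z = s by rw [hz_def]; ring] at hbin
  have hprod := hasSum_sum_range_mul_of_summable_norm
    (Complex.summable_norm_choose_mul_pow (α : ℂ) hz1) hXnorm
  rw [hbin.tsum_eq, hXz.tsum_eq] at hprod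
  refine hprod.congr_fun fun n => ?_
  rw [nablaGLDiff_nat_add_one_add hαZ]
  push_cast
  rw [mul_sum]
  refine sum_congr rfl fun j hj => ?_
  rw [← pow_mul_pow_sub z (mem_range_succ_iff.1 hj), neg_pow z]
  ring

/-- N-transform of the nabla Grünwald–Letnikov fractional difference:
`𝒩_a{ᴳ∇^α x}(s) = s^α X(s)`. -/
theorem nabla_transform_GL_diff
    (a : ℤ) (x : ℤ → ℝ) (X : ℂ → ℂ) (r : ℝ) (hr : r ≤ 1)
    (α : ℝ) (hα : 0 < α) (hαZ : ∀ n : ℕ, α ≠ (n : ℝ))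
    (hX : ∀ s : ℂ, ‖s - 1‖ < r →
      HasSum (fun k : ℕ => (1 - s) ^ k * (x ((k : ℤ) + 1 + a) : ℂ)) (X s)) :
    ∀ s : ℂ, ‖s - 1‖ < r →
      HasSum (fun k : ℕ => (1 - s) ^ k * (nablaGLDiff a α x ((k : ℤ) + 1 + a) : ℂ))
        (s ^ (α : ℂ) * X s) :=
  nabla_transform_GL_diff_general a x X r hr α hαZ hX
end
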